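/- Let R = ℚ[y,z] and take a₁ = y² + yz + z², b₁ = z − y, a₂ = y² + yz + z², b₂ = y − z in the rank-4 folded Koszul complex (note a₁b₁ + a₂b₂ = 0). Then the even homology ker d⁰/im d¹ vanishes, and the odd homology ker d¹/im d⁰ is generated as an R-module by the class of |01⟩ + |10⟩ and is isomorphic as an R-module to ℚ[y,z]/(y − z, y² + yz + z²), a quotient which is in turn isomorphic as a ℚ-algebra to ℚ[y]/(y²). -/

import Mathlib

set_option synthInstance.maxHeartbeats 1000000
set_option maxHeartbeats 1000000

/-- The differential `d⁰` of the rank-4 folded Koszul complex (tensor product of the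
two-periodic factorizations `(a₁,b₁)` and `(a₂,b₂)`), from the even part (free on
`|00⟩, |11⟩`, an element `(x, y)` standing for `x|00⟩ + y|11⟩`) to the odd part
(free on `|01⟩, |10⟩`, an element `(u, v)` standing for `u|01⟩ + v|10⟩`):
`d⁰(|00⟩) = a₁|10⟩ + a₂|01⟩`, `d⁰(|11⟩) = b₂|10⟩ − b₁|01⟩`. -/
noncomputable def rank4d0 {R : Type*} [CommRing R] (a₁ b₁ a₂ b₂ : R) :
    (R × R) →ₗ[R] (R × R) where
  toFun p := (a₂ * p.1 - b₁ * p.2, a₁ * p.1 + b₂ * p.2)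
  map_add' p q := by
    ext <;> simp <;> ring
  map_smul' r p := by
    ext <;> simp <;> ring

/-- The differential `d¹` of the rank-4 folded Koszul complex, from the odd part to the
even part: `d¹(|01⟩) = b₂|00⟩ − a₁|11⟩`, `d¹(|10⟩) = b₁|00⟩ + a₂|11⟩`. -/
noncomputable def rank4d1 {R : Type*} [CommRing R] (a₁ b₁ a₂ b₂ : R) :
    (R × R) →ₗ[R] (R × R) where
  toFun p := (b₂ * p.1 + b₁ * p.2, -(a₁ * p.1) + a₂ * p.2)
  map_add' p q := by
    ext <;> simp <;> ring
  map_smul' r p := by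
    ext <;> simp <;> ring

/-- The even homology `ker d⁰ / im d¹` of the rank-4 folded Koszul complex. -/
noncomputable abbrev rank4EvenHomology {R : Type*} [CommRing R] (a₁ b₁ a₂ b₂ : R) :=
  LinearMap.ker (rank4d0 a₁ b₁ a₂ b₂) ⧸
    ((LinearMap.range (rank4d1 a₁ b₁ a₂ b₂)).comap
      (LinearMap.ker (rank4d0 a₁ b₁ a₂ b₂)).subtype)

/-- The odd homology `ker d¹ / im d⁰` of the rank-4 folded Koszul complex. -/
noncomputable abbrev rank4OddHomology {R : Type*} [CommRing R] (a₁ b₁ a₂ b₂ : R) :=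
  LinearMap.ker (rank4d1 a₁ b₁ a₂ b₂) ⧸
    ((LinearMap.range (rank4d0 a₁ b₁ a₂ b₂)).comap
      (LinearMap.ker (rank4d1 a₁ b₁ a₂ b₂)).subtype)
/-!
With `a₁ = a₂ = f` and `b₂ = -b₁ = d`, both differentials have a very simple shape:
`d¹(u, v) = (d (u - v), f (v - u))` and `d⁰(x, w) = (f x + d w, f x + d w)`. Since `f ≠ 0`
in a domain, the odd cycles are the diagonal pairs `(u, u)`, and the odd boundaries are the
diagonal pairs with `u ∈ (d, f)`, so the odd homology is `R/(d, f)`, generated by `(1, 1)`.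
The even homology vanishes because `d, f` is a regular sequence: `d = y - z` is prime and does
not divide `f`. Both facts, and the last isomorphism, come from restricting to the diagonal
`z = y`, which identifies `R/(y - z)` with `ℚ[y]` and sends `f` to `3y²`.
-/

section FoldedKoszul

variable {R : Type*} [CommRing R]

@[simp]
lemma rank4d0_apply {a₁ b₁ a₂ b₂ : R} (p : R × R) :
    rank4d0 a₁ b₁ a₂ b₂ p = (a₂ * p.1 - b₁ * p.2, a₁ * p.1 + b₂ * p.2) := rfl

@[simp]
lemma rank4d1_apply {a₁ b₁ a₂ b₂ : R} (p : R × R) :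
    rank4d1 a₁ b₁ a₂ b₂ p = (b₂ * p.1 + b₁ * p.2, -(a₁ * p.1) + a₂ * p.2) := rfl

lemma mem_ker_rank4d1_iff [IsDomain R] {a : R} (ha : a ≠ 0) (b : R) (p : R × R) :
    p ∈ LinearMap.ker (rank4d1 a (-b) a b) ↔ p.2 = p.1 := by
  simp only [LinearMap.mem_ker, rank4d1_apply, Prod.mk_eq_zero]
  constructor
  · rintro ⟨-, h⟩
    exact sub_eq_zero.1 ((mul_eq_zero.1 (by linear_combination h)).resolve_left ha)
  · intro h
    rw [h]
    constructor <;> ring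

lemma mem_range_rank4d0_iff (a b : R) (p : R × R) :
    p ∈ LinearMap.range (rank4d0 a (-b) a b) ↔ p.2 = p.1 ∧ p.1 ∈ Ideal.span {b, a} := by
  simp only [LinearMap.mem_range, rank4d0_apply, Ideal.mem_span_pair]
  constructor
  · rintro ⟨q, rfl⟩
    exact ⟨by ring, q.2, q.1, by ring⟩
  · rintro ⟨h, s, t, hst⟩
    refine ⟨(t, s), Prod.ext ?_ ?_⟩
    · show a * t - -b * s = p.1
      linear_combination hst
    · show a * t + b * s = p.2
      linear_combination hst - h

lemma rank4EvenHomology_subsingleton [IsDomain R] (a : R) {b : R} (hb : Prime b) (hab : ¬b ∣ a) :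
    Subsingleton (rank4EvenHomology a (-b) a b) := by
  rw [Submodule.Quotient.subsingleton_iff, eq_top_iff]
  rintro ⟨⟨x, w⟩, hxw⟩ -
  have hcycle : a * x + b * w = 0 := by simpa using hxw
  obtain ⟨t, rfl⟩ : b ∣ x :=
    (hb.dvd_or_dvd ⟨-w, by linear_combination hcycle⟩).resolve_left hab
  have hw : w = -(a * t) :=
    eq_neg_of_add_eq_zero_left <| (mul_eq_zero.1 (by linear_combination hcycle)).resolve_left
      hb.ne_zero
  exact ⟨(t, 0), by simp [hw]⟩

lemma diag_mem_ker_rank4d1 (a b u : R) : (u, u) ∈ LinearMap.ker (rank4d1 a (-b) a b) := by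
  simp only [LinearMap.mem_ker, rank4d1_apply, Prod.mk_eq_zero]
  constructor <;> ring

noncomputable def rank4OddCycleToQuot (a b : R) :
    LinearMap.ker (rank4d1 a (-b) a b) →ₗ[R] R ⧸ Ideal.span {b, a} :=
  (Ideal.span {b, a}).mkQ ∘ₗ LinearMap.fst R R R ∘ₗ (LinearMap.ker _).subtype

lemma rank4OddCycleToQuot_surjective (a b : R) : Function.Surjective (rank4OddCycleToQuot a b) := by
  rintro ⟨u⟩
  exact ⟨⟨(u, u), diag_mem_ker_rank4d1 a b u⟩, rfl⟩

lemma ker_rank4OddCycleToQuot [IsDomain R] {a : R} (ha : a ≠ 0) (b : R) :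
    LinearMap.ker (rank4OddCycleToQuot a b) =
      (LinearMap.range (rank4d0 a (-b) a b)).comap (LinearMap.ker (rank4d1 a (-b) a b)).subtype := by
  ext ⟨p, hp⟩
  have hdiag := (mem_ker_rank4d1_iff ha b p).1 hp
  simp only [Submodule.mem_comap, Submodule.coe_subtype, mem_range_rank4d0_iff, hdiag,
    true_and, LinearMap.mem_ker, rank4OddCycleToQuot, LinearMap.coe_comp, Function.comp_apply,
    LinearMap.fst_apply, Submodule.mkQ_apply, Ideal.Quotient.mk_eq_mk,
    Ideal.Quotient.eq_zero_iff_mem]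

noncomputable def rank4OddHomologyEquiv [IsDomain R] {a : R} (ha : a ≠ 0) (b : R) :
    rank4OddHomology a (-b) a b ≃ₗ[R] R ⧸ Ideal.span {b, a} :=
  (Submodule.quotEquivOfEq _ _ (ker_rank4OddCycleToQuot ha b).symm).trans
    ((rank4OddCycleToQuot a b).quotKerEquivOfSurjective (rank4OddCycleToQuot_surjective a b))

lemma span_rank4OddHomology_diag_one [IsDomain R] {a : R} (ha : a ≠ 0) (b : R) :
    Submodule.span R {(Submodule.Quotient.mk ⟨(1, 1), diag_mem_ker_rank4d1 a b 1⟩ :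
      rank4OddHomology a (-b) a b)} = ⊤ := by
  refine Submodule.eq_top_iff'.2 fun c => ?_
  obtain ⟨⟨p, hp⟩, rfl⟩ := Submodule.Quotient.mk_surjective _ c
  have hdiag := (mem_ker_rank4d1_iff ha b p).1 hp
  have hp_smul : (⟨p, hp⟩ : LinearMap.ker (rank4d1 a (-b) a b)) =
      p.1 • ⟨(1, 1), diag_mem_ker_rank4d1 a b 1⟩ :=
    Subtype.ext (Prod.ext (by simp) (by simp [hdiag]))
  rw [hp_smul, Submodule.Quotient.mk_smul]
  exact Submodule.smul_mem _ _ (Submodule.mem_span_singleton_self _)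

end FoldedKoszul

open MvPolynomial

section Diagonal

variable (K : Type*) [CommRing K]

noncomputable def diagonalRestriction : MvPolynomial (Fin 2) K →ₐ[K] Polynomial K :=
  aeval fun _ => Polynomial.X

variable {K}

@[simp]
lemma diagonalRestriction_X (i : Fin 2) : diagonalRestriction K (X i) = Polynomial.X :=
  aeval_X _ _

lemma diagonalRestriction_comp_aeval_X_zero :
    (diagonalRestriction K).comp (Polynomial.aeval (X 0)) = AlgHom.id K (Polynomial K) :=
  Polynomial.algHom_ext (by simp)

lemma diagonalRestriction_surjective : Function.Surjective (diagonalRestriction K) := fun p =>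
  ⟨Polynomial.aeval (X 0) p, AlgHom.congr_fun diagonalRestriction_comp_aeval_X_zero p⟩

lemma ker_diagonalRestriction :
    RingHom.ker (diagonalRestriction K) = Ideal.span {X 0 - X 1} := by
  set I : Ideal (MvPolynomial (Fin 2) K) := Ideal.span {X 0 - X 1}
  refine le_antisymm (fun p hp => ?_) ((Ideal.span_singleton_le_iff_mem _).2 (by simp))
  -- modulo `X 0 - X 1` every polynomial agrees with its value on the diagonal
  have hmod : Ideal.Quotient.mkₐ K I =
      (Ideal.Quotient.mkₐ K I).comp ((Polynomial.aeval (X 0)).comp (diagonalRestriction K)) := by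
    refine MvPolynomial.algHom_ext fun i => ?_
    fin_cases i
    · simp
    · simpa [Ideal.Quotient.mk_eq_mk_iff_sub_mem, I] using
        Ideal.mem_span_singleton'.2 ⟨-1, by ring⟩
  have hp0 : diagonalRestriction K p = 0 := hp
  simpa [hp0, Ideal.Quotient.eq_zero_iff_mem] using AlgHom.congr_fun hmod p

lemma prime_X_zero_sub_X_one [IsDomain K] : Prime (X 0 - X 1 : MvPolynomial (Fin 2) K) := by
  have hne : (X 0 - X 1 : MvPolynomial (Fin 2) K) ≠ 0 :=
    sub_ne_zero.2 fun h => zero_ne_one (X_injective h)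
  rw [← Ideal.span_singleton_prime hne, ← ker_diagonalRestriction]
  exact RingHom.ker_isPrime _

lemma diagonalRestriction_quadratic :
    diagonalRestriction K (X 0 ^ 2 + X 0 * X 1 + X 1 ^ 2) = 3 * Polynomial.X ^ 2 := by
  simp only [map_add, map_mul, map_pow, diagonalRestriction_X]
  ring

end Diagonal

section Quadratic

variable {K : Type*} [Field K] [CharZero K]

lemma diagonalRestriction_quadratic_ne_zero :
    diagonalRestriction K (X 0 ^ 2 + X 0 * X 1 + X 1 ^ 2) ≠ 0 := by
  rw [diagonalRestriction_quadratic]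
  exact mul_ne_zero (OfNat.zero_ne_ofNat 3).symm (pow_ne_zero _ Polynomial.X_ne_zero)

lemma quadratic_ne_zero : (X 0 ^ 2 + X 0 * X 1 + X 1 ^ 2 : MvPolynomial (Fin 2) K) ≠ 0 :=
  fun h => diagonalRestriction_quadratic_ne_zero (by rw [h, map_zero])

lemma not_X_zero_sub_X_one_dvd_quadratic :
    ¬(X 0 - X 1 : MvPolynomial (Fin 2) K) ∣ X 0 ^ 2 + X 0 * X 1 + X 1 ^ 2 := by
  rw [← Ideal.mem_span_singleton, ← ker_diagonalRestriction, RingHom.mem_ker]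
  exact diagonalRestriction_quadratic_ne_zero

lemma ker_diagonalRestriction_mod_X_sq :
    RingHom.ker ((Ideal.Quotient.mkₐ K (Ideal.span {(Polynomial.X : Polynomial K) ^ 2})).comp
        (diagonalRestriction K)) =
      Ideal.span {X 0 - X 1, X 0 ^ 2 + X 0 * X 1 + X 1 ^ 2} := by
  have hX_sq : Ideal.span {(Polynomial.X : Polynomial K) ^ 2} =
      (Ideal.span {X 0 ^ 2 + X 0 * X 1 + X 1 ^ 2}).map (diagonalRestriction K) := by
    rw [Ideal.map_span, Set.image_singleton, diagonalRestriction_quadratic,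
      Ideal.span_singleton_mul_left_unit]
    rw [← map_ofNat Polynomial.C 3]
    exact Polynomial.isUnit_C.2 (isUnit_iff_ne_zero.2 three_ne_zero)
  ext p
  rw [RingHom.mem_ker, AlgHom.comp_apply, Ideal.Quotient.mkₐ_eq_mk, Ideal.Quotient.eq_zero_iff_mem,
    ← Ideal.mem_comap, hX_sq, Ideal.comap_map_of_surjective _ diagonalRestriction_surjective,
    ← RingHom.ker_eq_comap_bot, ker_diagonalRestriction, Ideal.span_insert, sup_comm]

noncomputable def quotientQuadraticAlgEquiv :
    (MvPolynomial (Fin 2) K ⧸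
        Ideal.span {(X 0 - X 1 : MvPolynomial (Fin 2) K), X 0 ^ 2 + X 0 * X 1 + X 1 ^ 2}) ≃ₐ[K]
      Polynomial K ⧸ Ideal.span {(Polynomial.X : Polynomial K) ^ 2} :=
  (Ideal.quotientEquivAlgOfEq K ker_diagonalRestriction_mod_X_sq.symm).trans
    (Ideal.quotientKerAlgEquivOfSurjective
      ((Ideal.Quotient.mkₐ_surjective K _).comp diagonalRestriction_surjective))

end Quadratic

/-- For `R = ℚ[y,z]` and the rank-4 folded Koszul complex with
`a₁ = y² + yz + z²`, `b₁ = z − y`, `a₂ = y² + yz + z²`, `b₂ = y − z` (so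
`a₁b₁ + a₂b₂ = 0`): the even homology `ker d⁰/im d¹` vanishes, and the odd homology
`ker d¹/im d⁰` is generated as an `R`-module by the class of `|01⟩ + |10⟩` and is
isomorphic as an `R`-module to `ℚ[y,z]/(y − z, y² + yz + z²)`, a quotient which is in
turn isomorphic as a `ℚ`-algebra to `ℚ[y]/(y²)`. -/
theorem homology_of_J0 (y z : MvPolynomial (Fin 2) ℚ)
    (hy : y = MvPolynomial.X 0) (hz : z = MvPolynomial.X 1) :
    ((y ^ 2 + y * z + z ^ 2) * (z - y) + (y ^ 2 + y * z + z ^ 2) * (y - z) = 0) ∧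
    Subsingleton (rank4EvenHomology (y ^ 2 + y * z + z ^ 2) (z - y)
      (y ^ 2 + y * z + z ^ 2) (y - z)) ∧
    (∃ h : ((1, 1) : MvPolynomial (Fin 2) ℚ × MvPolynomial (Fin 2) ℚ) ∈
        LinearMap.ker (rank4d1 (y ^ 2 + y * z + z ^ 2) (z - y)
          (y ^ 2 + y * z + z ^ 2) (y - z)),
      Submodule.span (MvPolynomial (Fin 2) ℚ)
          {(Submodule.Quotient.mk ⟨_, h⟩ :
            rank4OddHomology (y ^ 2 + y * z + z ^ 2) (z - y)
              (y ^ 2 + y * z + z ^ 2) (y - z))} = ⊤ ∧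
      Nonempty (rank4OddHomology (y ^ 2 + y * z + z ^ 2) (z - y)
            (y ^ 2 + y * z + z ^ 2) (y - z)
          ≃ₗ[MvPolynomial (Fin 2) ℚ]
        (MvPolynomial (Fin 2) ℚ ⧸ Ideal.span {y - z, y ^ 2 + y * z + z ^ 2}))) ∧
    Nonempty ((MvPolynomial (Fin 2) ℚ ⧸ Ideal.span {y - z, y ^ 2 + y * z + z ^ 2})
        ≃ₐ[ℚ] (Polynomial ℚ ⧸ Ideal.span {(Polynomial.X : Polynomial ℚ) ^ 2})) := by
  subst hy hz
  rw [← neg_sub (X 0) (X 1)]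
  have hf : (X 0 ^ 2 + X 0 * X 1 + X 1 ^ 2 : MvPolynomial (Fin 2) ℚ) ≠ 0 := quadratic_ne_zero
  exact ⟨by ring,
    rank4EvenHomology_subsingleton _ prime_X_zero_sub_X_one not_X_zero_sub_X_one_dvd_quadratic,
    ⟨diag_mem_ker_rank4d1 _ _ 1, span_rank4OddHomology_diag_one hf _,
      ⟨rank4OddHomologyEquiv hf _⟩⟩,
    ⟨quotientQuadraticAlgEquiv⟩⟩
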